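/- Let α ∈ (0,1) and let k ≥ 2 be an integer. The function λ_k(θ) = (2k)^α · sin(θ/(2k))^α · sin(θ/2 + α(π/2 − θ/(2k))) / sin(θ/2) is monotonically decreasing (antitone) on the interval ((1−α)kπ/(k−α), π). -/

import Mathlib

/-!
Write `x = θ / (2k)` (so `θ / 2 = kx`) and `β = α (π/2 - x)`. The derivative of `λ_k` has the sign
of `α sin (kx + β) sin ((k-1)x) - (k - α) sin x sin β`. On the given interval `kx + β ∈ (π/2, π)`;
put `u = π - (kx + β) ∈ (0, π/2)`. Since `sin ((k-1)x) ≤ (k-1) sin x`, it suffices that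
`α (k-1) sin u ≤ (k - α) sin β`, which follows from `α (k-1) ≤ k - α` and `α (k-1) u ≤ (k - α) β`
because `sin` is increasing on `[0, π/2]` and `sin t / t` is decreasing on `(0, π]` (concavity of
`sin`).
-/

open Real

/-- Along the curve `Γ_0`, the quantity
`λ_k(θ) = (2k)^α sin(θ/(2k))^α sin(θ/2 + α(π/2 − θ/(2k))) / sin(θ/2)`. -/
noncomputable def lamk (α : ℝ) (k : ℕ) (θ : ℝ) : ℝ :=
  (2 * (k:ℝ)) ^ α * Real.sin (θ / (2 * (k:ℝ))) ^ α *
    Real.sin (θ / 2 + α * (Real.pi / 2 - θ / (2 * (k:ℝ)))) / Real.sin (θ / 2)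

namespace Real

theorem mul_sin_le_sin_mul {t y : ℝ} (ht₀ : 0 ≤ t) (ht₁ : t ≤ 1) (hy₀ : 0 ≤ y) (hy : y ≤ π) :
    t * sin y ≤ sin (t * y) := by
  have := strictConcaveOn_sin_Icc.concaveOn.2 ⟨hy₀, hy⟩ ⟨le_rfl, pi_pos.le⟩ ht₀ (sub_nonneg.2 ht₁)
    (add_sub_cancel t 1)
  simpa using this

theorem mul_sin_le_mul_sin {s y : ℝ} (hs : 0 < s) (hsy : s ≤ y) (hy : y ≤ π) :
    s * sin y ≤ y * sin s := by
  have hy₀ : 0 < y := hs.trans_le hsy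
  have := mul_sin_le_sin_mul (div_nonneg hs.le hy₀.le) ((div_le_one hy₀).2 hsy) hy₀.le hy
  rwa [div_mul_cancel₀ _ hy₀.ne', div_mul_eq_mul_div, div_le_iff₀ hy₀, mul_comm (sin s)] at this

theorem sin_mul_le_mul_sin {n x : ℝ} (hn : 1 ≤ n) (hx : 0 < x) (hnx : n * x ≤ π) :
    sin (n * x) ≤ n * sin x := by
  have := mul_sin_le_mul_sin hx (le_mul_of_one_le_left hx.le hn) hnx
  nlinarith

theorem mul_sin_le_mul_sin_of_mul_le {a c u v : ℝ} (ha : 0 ≤ a) (hac : a ≤ c)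
    (hauv : a * u ≤ c * v) (hu : 0 ≤ u) (hu' : u ≤ π) (hv : 0 < v) (hv' : v ≤ π / 2) :
    a * sin u ≤ c * sin v := by
  have hsv : 0 ≤ sin v := sin_nonneg_of_nonneg_of_le_pi hv.le (by linarith [pi_pos])
  rcases le_or_gt u v with huv | hvu
  · calc a * sin u ≤ a * sin v :=
          mul_le_mul_of_nonneg_left (sin_le_sin_of_le_of_le_pi_div_two (by linarith) hv' huv) ha
      _ ≤ c * sin v := mul_le_mul_of_nonneg_right hac hsv
  · have hsinc := mul_sin_le_mul_sin hv hvu.le hu'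
    refine le_of_mul_le_mul_left ?_ hv
    calc v * (a * sin u) = a * (v * sin u) := by ring
      _ ≤ a * (u * sin v) := mul_le_mul_of_nonneg_left hsinc ha
      _ = (a * u) * sin v := by ring
      _ ≤ (c * v) * sin v := mul_le_mul_of_nonneg_right hauv hsv
      _ = v * (c * sin v) := by ring

theorem mul_sin_add_mul_sin_le_mul_sin_mul_sin {α k x : ℝ} (hα₀ : 0 < α) (hα₁ : α ≤ 1)
    (hk : 2 ≤ k) (hx : 0 < x) (hkx : k * x < π / 2) (hψ : (1 - α) * (π / 2) < (k - α) * x) :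
    α * sin (k * x + α * (π / 2 - x)) * sin ((k - 1) * x)
      ≤ (k - α) * sin x * sin (α * (π / 2 - x)) := by
  set β := α * (π / 2 - x) with hβ
  set u := π - (k * x + β) with hu
  have hβ₀ : 0 < β := mul_pos hα₀ (by nlinarith)
  have hβ₁ : β < π / 2 := by nlinarith
  have hu₀ : 0 < u := by linarith
  have hsu : 0 ≤ sin u := sin_nonneg_of_nonneg_of_le_pi hu₀.le (by linarith)
  have hsx : 0 ≤ sin x := sin_nonneg_of_nonneg_of_le_pi hx.le (by nlinarith)
  have hmul := sin_mul_le_mul_sin (by linarith : 1 ≤ k - 1) hx (by nlinarith)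
  have hcomp : α * (k - 1) * sin u ≤ (k - α) * sin β := by
    refine mul_sin_le_mul_sin_of_mul_le (by nlinarith) (by nlinarith) ?_ hu₀.le (by linarith)
      hβ₀ hβ₁.le
    -- `(k - α) β - α (k - 1) u = α (k - 2) ((k - α) x - (1 - α) π/2)`
    have := mul_nonneg hα₀.le (mul_nonneg (by linarith : 0 ≤ k - 2)
      (by linarith : 0 ≤ (k - α) * x - (1 - α) * (π / 2)))
    rw [hu, hβ]
    linarith
  calc α * sin (k * x + β) * sin ((k - 1) * x) = α * sin u * sin ((k - 1) * x) := by
        rw [hu, sin_pi_sub]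
    _ ≤ α * sin u * ((k - 1) * sin x) := mul_le_mul_of_nonneg_left hmul (by positivity)
    _ = sin x * (α * (k - 1) * sin u) := by ring
    _ ≤ sin x * ((k - α) * sin β) := mul_le_mul_of_nonneg_left hcomp hsx
    _ = (k - α) * sin x * sin β := by ring

theorem sin_div_two_mul_pos {θ k : ℝ} (hθ : θ ∈ Set.Ioo 0 π) (hk : 1 ≤ k) :
    0 < sin (θ / (2 * k)) := by
  obtain ⟨hθ₀, hθπ⟩ := hθ
  refine sin_pos_of_pos_of_lt_pi (by positivity) ((div_lt_iff₀ (by positivity)).2 ?_)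
  nlinarith [pi_pos]

end Real

theorem Ioo_threshold_subset_Ioo_zero_pi {α k : ℝ} (hα₀ : 0 ≤ α) (hα₁ : α ≤ 1) (hαk : α < k) :
    Set.Ioo ((1 - α) * k * π / (k - α)) π ⊆ Set.Ioo 0 π :=
  Set.Ioo_subset_Ioo_left <|
    div_nonneg (mul_nonneg (mul_nonneg (by linarith) (by linarith)) pi_pos.le) (by linarith)

noncomputable def lamkDeriv (α : ℝ) (k : ℕ) (θ : ℝ) : ℝ :=
  (2 * k) ^ α * sin (θ / (2 * k)) ^ (α - 1) / (2 * k * sin (θ / 2) ^ 2) *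
    (α * sin (θ / 2 + α * (π / 2 - θ / (2 * k))) * sin (θ / 2 - θ / (2 * k)) -
      (k - α) * sin (θ / (2 * k)) * sin (α * (π / 2 - θ / (2 * k))))

theorem hasDerivAt_lamk {α θ : ℝ} {k : ℕ} (hk : k ≠ 0) (hθ : θ ∈ Set.Ioo 0 π) :
    HasDerivAt (lamk α k) (lamkDeriv α k θ) θ := by
  have hx := sin_div_two_mul_pos (k := k) hθ (by exact_mod_cast Nat.one_le_iff_ne_zero.2 hk)
  have hθ' : sin (θ / 2) ≠ 0 :=
    (sin_pos_of_pos_of_lt_pi (by linarith [hθ.1]) (by linarith [hθ.2, pi_pos])).ne'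
  have hx' : HasDerivAt (fun t : ℝ => t / (2 * k)) (1 / (2 * k)) θ := (hasDerivAt_id θ).div_const _
  have hhalf : HasDerivAt (fun t : ℝ => t / 2) (1 / 2) θ := (hasDerivAt_id θ).div_const _
  have hpow := ((hx'.sin).rpow_const (p := α) (Or.inl hx.ne')).const_mul ((2 * (k : ℝ)) ^ α)
  have hψ := (hhalf.add (((hasDerivAt_const θ (π / 2)).sub hx').const_mul α)).sin
  refine ((hpow.mul hψ).div hhalf.sin hθ').congr_deriv ?_
  simp only [Pi.add_apply, Pi.sub_apply, Pi.mul_apply]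
  unfold lamkDeriv
  set x := θ / (2 * k)
  set ψ := θ / 2 + α * (π / 2 - x)
  rw [show α * (π / 2 - x) = ψ - θ / 2 by ring, sin_sub, sin_sub, rpow_sub_one hx.ne']
  field_simp
  ring

theorem lamkDeriv_nonpos {α θ : ℝ} {k : ℕ} (hα₀ : 0 < α) (hα₁ : α ≤ 1) (hk : 2 ≤ k)
    (hθ : θ ∈ Set.Ioo ((1 - α) * k * π / (k - α)) π) : lamkDeriv α k θ ≤ 0 := by
  have hk₂ : (2 : ℝ) ≤ k := by exact_mod_cast hk
  have hkα : 0 < (k : ℝ) - α := by linarith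
  have hθ' := Ioo_threshold_subset_Ioo_zero_pi hα₀.le hα₁ (by linarith) hθ
  have hkx : (k : ℝ) * (θ / (2 * k)) = θ / 2 := by field_simp
  have hψ : (1 - α) * (π / 2) < (k - α) * (θ / (2 * k)) := by
    have := (div_lt_iff₀ hkα).1 hθ.1
    rw [← sub_pos] at this ⊢
    field_simp
    nlinarith
  have key := mul_sin_add_mul_sin_le_mul_sin_mul_sin hα₀ hα₁ hk₂ (div_pos hθ'.1 (by positivity))
    (by rw [hkx]; linarith [hθ.2]) hψ
  rw [hkx, sub_one_mul, hkx] at key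
  have hx := (sin_div_two_mul_pos (k := k) hθ' (by linarith)).le
  exact mul_nonpos_of_nonneg_of_nonpos (by have := rpow_nonneg hx (α - 1); positivity)
    (sub_nonpos.2 key)

theorem lamk_antitoneOn (α : ℝ) (hα : α ∈ Set.Ioo (0:ℝ) 1) (k : ℕ) (hk : 2 ≤ k) :
    AntitoneOn (lamk α k) (Set.Ioo ((1 - α) * (k:ℝ) * π / ((k:ℝ) - α)) π) := by
  obtain ⟨hα₀, hα₁⟩ := hα
  have hk₂ : (2 : ℝ) ≤ k := by exact_mod_cast hk
  have hderiv θ (hθ : θ ∈ Set.Ioo ((1 - α) * (k:ℝ) * π / ((k:ℝ) - α)) π) :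
      HasDerivAt (lamk α k) (lamkDeriv α k θ) θ :=
    hasDerivAt_lamk (by omega) (Ioo_threshold_subset_Ioo_zero_pi hα₀.le hα₁.le (by linarith) hθ)
  refine antitoneOn_of_hasDerivWithinAt_nonpos (f' := lamkDeriv α k) (convex_Ioo _ _)
    (fun θ hθ => (hderiv θ hθ).continuousAt.continuousWithinAt) ?_ ?_ <;> rw [interior_Ioo]
  · exact fun θ hθ => (hderiv θ hθ).hasDerivWithinAt
  · exact fun θ hθ => lamkDeriv_nonpos hα₀ hα₁.le hk hθ
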